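/- Let $S = K[x_1,\ldots,x_n]$ be a polynomial ring over a field $K$ and let $I \subset S$ be a stable monomial ideal (i.e., for every monomial $u \in I$ and every $i \le m(u)$, where $m(u) = \max\{i : x_i \mid u\}$, one has $(x_i/x_{m(u)})u \in I$). Then for any monomial $u \in S$ and any $k \ge 1$, if $x_n^k u \in I$ then $l^k u \in I$ for every linear form $l$; in particular the colon ideal satisfies $(I :_S x_n^k) \subseteq (I :_S l^k)$ for every linear form $l \in S_1$. -/
import Mathlib


open MvPolynomial

variable {K : Type*} [Field K] {n : ℕ}

/-- The total degree of an exponent vector. -/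
def mdeg {n : ℕ} (m : Fin n →₀ ℕ) : ℕ := m.sum fun _ e => e

/-- `I` is a monomial ideal: it contains every monomial of each of its elements. -/
def IsMonomialIdeal (I : Ideal (MvPolynomial (Fin n) K)) : Prop :=
  ∀ f ∈ I, ∀ m ∈ f.support, (monomial m (1 : K)) ∈ I

/-- `I` is stable: for every monomial `u ∈ I` with largest dividing variable `x_k`,
and every `i ≤ k`, the monomial `(x_i / x_k) * u` lies in `I`. -/
def IsStableIdeal (I : Ideal (MvPolynomial (Fin n) K)) : Prop :=
  ∀ m : Fin n →₀ ℕ, (monomial m (1 : K)) ∈ I →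
    ∀ k i : Fin n, m k ≠ 0 → (∀ k', k < k' → m k' = 0) → i ≤ k →
      (monomial (m + Finsupp.single i 1 - Finsupp.single k 1) (1 : K)) ∈ I

/-- `I` is strongly stable: for every monomial `u ∈ I`, every variable `x_k` dividing `u`
and every `i ≤ k`, the monomial `(x_i / x_k) * u` lies in `I`. -/
def IsStronglyStableIdeal (I : Ideal (MvPolynomial (Fin n) K)) : Prop :=
  ∀ m : Fin n →₀ ℕ, (monomial m (1 : K)) ∈ I →
    ∀ k i : Fin n, m k ≠ 0 → i ≤ k →
      (monomial (m + Finsupp.single i 1 - Finsupp.single k 1) (1 : K)) ∈ I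

/-- `v <_lex u` for exponent vectors, lex order with `x_1 > x_2 > ⋯ > x_n`. -/
def lexLt {n : ℕ} (v u : Fin n →₀ ℕ) : Prop :=
  ∃ i : Fin n, (∀ j < i, v j = u j) ∧ v i < u i

/-- `I` is a lexsegment ideal. -/
def IsLexsegmentIdeal (I : Ideal (MvPolynomial (Fin n) K)) : Prop :=
  IsMonomialIdeal I ∧
    ∀ u v : Fin n →₀ ℕ, (monomial u (1 : K)) ∈ I → mdeg v = mdeg u → lexLt u v →
      (monomial v (1 : K)) ∈ I

/-- The degree `j` piece of `S/I`, as the image of the degree `j` homogeneous polynomials. -/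
noncomputable def Qpiece (I : Ideal (MvPolynomial (Fin n) K)) (j : ℕ) :
    Submodule K (MvPolynomial (Fin n) K ⧸ I) :=
  (homogeneousSubmodule (Fin n) K j).map (Ideal.Quotient.mkₐ K I).toLinearMap

/-- Multiplication by `g` maps `(S/I)_j` injectively (to `(S/I)_{j'}`). -/
def QInj (I : Ideal (MvPolynomial (Fin n) K)) (g : MvPolynomial (Fin n) K)
    (j _j' : ℕ) : Prop :=
  ∀ f₁ ∈ Qpiece I j, ∀ f₂ ∈ Qpiece I j,
    Ideal.Quotient.mk I g * f₁ = Ideal.Quotient.mk I g * f₂ → f₁ = f₂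

/-- Multiplication by `g` maps `(S/I)_j` onto `(S/I)_{j'}`. -/
def QSurj (I : Ideal (MvPolynomial (Fin n) K)) (g : MvPolynomial (Fin n) K)
    (j j' : ℕ) : Prop :=
  ∀ h ∈ Qpiece I j', ∃ f ∈ Qpiece I j, Ideal.Quotient.mk I g * f = h

/-- Multiplication by `g` from `(S/I)_j` to `(S/I)_{j'}` has maximal rank. -/
def MulMaxRank (I : Ideal (MvPolynomial (Fin n) K)) (g : MvPolynomial (Fin n) K)
    (j j' : ℕ) : Prop :=
  QInj I g j j' ∨ QSurj I g j j'


lemma mdeg_add' {n : ℕ} (a b : Fin n →₀ ℕ) : mdeg (a + b) = mdeg a + mdeg b := by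
  simp [mdeg, Finsupp.sum_add_index]

lemma mdeg_single' {n : ℕ} (i : Fin n) (e : ℕ) : mdeg (Finsupp.single i e) = e := by
  simp [mdeg, Finsupp.sum_single_index]

lemma mdeg_eq_zero' {n : ℕ} {w : Fin n →₀ ℕ} (h : mdeg w = 0) : w = 0 := by
  ext j
  by_contra hj
  have hjs : j ∈ w.support := Finsupp.mem_support_iff.mpr hj
  exact hj (Finset.sum_eq_zero_iff.mp h j hjs)

lemma key_lemma' {K : Type*} [Field K] {n : ℕ} (hn : 1 ≤ n)
    (I : Ideal (MvPolynomial (Fin n) K)) (hst : IsStableIdeal I) :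
    ∀ k (m : Fin n →₀ ℕ),
      monomial (m + Finsupp.single (⟨n - 1, by omega⟩ : Fin n) k) (1 : K) ∈ I →
      ∀ w : Fin n →₀ ℕ, mdeg w = k → monomial (m + w) (1 : K) ∈ I := by
  intro k
  induction k with
  | zero =>
    intro m hm w hw
    rw [mdeg_eq_zero' hw]
    simpa using hm
  | succ k ih =>
    intro m hm w hw
    set last : Fin n := ⟨n - 1, by omega⟩ with hlast
    have hlast_top : ∀ j : Fin n, j ≤ last := by
      intro j
      have hj := j.isLt
      rw [Fin.le_def]
      simp only [hlast, Fin.val_mk]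
      omega
    have hwne : w ≠ 0 := by
      intro h; rw [h] at hw; simp [mdeg] at hw
    obtain ⟨i, hi⟩ := Finsupp.ne_iff.mp hwne
    simp only [Finsupp.coe_zero, Pi.zero_apply] at hi
    have h1 := hst _ hm last i (by simp [Finsupp.add_apply, Finsupp.single_apply])
      (fun k' hk' => absurd (hlast_top k') (not_le.mpr hk')) (hlast_top i)
    have heq : (m + Finsupp.single last (k+1)) + Finsupp.single i 1 - Finsupp.single last 1
        = (m + Finsupp.single i 1) + Finsupp.single last k := by
      ext j
      simp only [Finsupp.tsub_apply, Finsupp.add_apply, Finsupp.single_apply]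
      by_cases h1 : last = j <;> by_cases h2 : i = j <;> simp [h1, h2] <;> omega
    rw [heq] at h1
    set w' : Fin n →₀ ℕ := w - Finsupp.single i 1 with hw'
    have hweq : w = w' + Finsupp.single i 1 := by
      ext j
      simp only [hw', Finsupp.add_apply, Finsupp.tsub_apply, Finsupp.single_apply]
      rcases eq_or_ne i j with rfl | h2
      · simp; omega
      · simp [h2]
    have hw'deg : mdeg w' = k := by
      have h3 := hw
      rw [hweq, mdeg_add', mdeg_single'] at h3
      omega
    have h4 := ih (m + Finsupp.single i 1) h1 w' hw'deg
    rwa [add_assoc, add_comm (Finsupp.single i 1) w', ← hweq] at h4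

/-- If `I` is a stable monomial ideal, `x_n^k u ∈ I` for a monomial `u` implies `l^k u ∈ I`
for every linear form `l`; in particular `(I : x_n^k) ⊆ (I : l^k)`. -/
theorem stmt_0 (hn : 1 ≤ n) (I : Ideal (MvPolynomial (Fin n) K))
    (hmon : IsMonomialIdeal I) (hst : IsStableIdeal I)
    (k : ℕ) (hk : 1 ≤ k)
    (l : MvPolynomial (Fin n) K) (hl : l ∈ homogeneousSubmodule (Fin n) K 1) :
    (∀ m : Fin n →₀ ℕ,
        (X (⟨n - 1, by omega⟩ : Fin n)) ^ k * monomial m (1 : K) ∈ I →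
          l ^ k * monomial m (1 : K) ∈ I) ∧
    I.colon (Ideal.span {(X (⟨n - 1, by omega⟩ : Fin n) : MvPolynomial (Fin n) K) ^ k}) ≤
      I.colon (Ideal.span {l ^ k}) := by
  set last : Fin n := ⟨n - 1, by omega⟩ with hlast
  have hlk : (l ^ k).IsHomogeneous k := by
    have := (mem_homogeneousSubmodule 1 l).mp hl
    simpa using this.pow k
  have part1 : ∀ m : Fin n →₀ ℕ,
      (X last) ^ k * monomial m (1 : K) ∈ I → l ^ k * monomial m (1 : K) ∈ I := by
    intro m hXm
    rw [X_pow_eq_monomial, monomial_mul, one_mul, add_comm] at hXm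
    rw [(l ^ k).as_sum, Finset.sum_mul]
    apply Ideal.sum_mem
    intro w hw
    have hwdeg : mdeg w = k := by
      have h := hlk (MvPolynomial.mem_support_iff.mp hw)
      rw [show mdeg w = Finsupp.degree w from rfl, Finsupp.degree_eq_weight_one]
      exact h
    have hmem := key_lemma' hn I hst k m hXm w hwdeg
    rw [monomial_mul, mul_one]
    have : monomial (w + m) (coeff w (l ^ k)) =
        C (coeff w (l ^ k)) * monomial (w + m) (1 : K) := by
      rw [C_mul_monomial, mul_one]
    rw [this, add_comm w m]
    exact I.mul_mem_left _ hmem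
  refine ⟨part1, ?_⟩
  intro f hf
  rw [Ideal.mem_colon_span_singleton] at hf ⊢
  rw [f.as_sum, Finset.sum_mul]
  apply Ideal.sum_mem
  intro m hm
  have hXm : (X last) ^ k * monomial m (1 : K) ∈ I := by
    have hmem : (X last) ^ k * f ∈ I := by rwa [mul_comm]
    have hc : coeff (Finsupp.single last k + m) ((X last) ^ k * f) ≠ 0 := by
      rw [X_pow_eq_monomial, coeff_monomial_mul, one_mul]
      exact MvPolynomial.mem_support_iff.mp hm
    have := hmon _ hmem _ (MvPolynomial.mem_support_iff.mpr hc)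
    rwa [X_pow_eq_monomial, monomial_mul, one_mul]
  have hlm := part1 m hXm
  have h2 : monomial m (coeff m f) * l ^ k =
      C (coeff m f) * (l ^ k * monomial m (1 : K)) := by
    rw [mul_comm (l ^ k) _, ← mul_assoc, C_mul_monomial, mul_one]
  rw [h2]
  exact I.mul_mem_left _ hlm
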